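/- Let g : ℝ → ℂ be of bounded variation and for N ∈ ℕ define G_N : ℤ → ℂ by G_N(n) = 2^N ∫_{(n−1/2)/2^N}^{(n+1/2)/2^N} g(t) dt. Then Var_ℤ(G_N) ≤ Var_ℝ(g). -/

import Mathlib

open MeasureTheory

/-- Total variation over ℝ. -/
noncomputable def varR (g : ℝ → ℂ) : ENNReal :=
  ⨆ φ : {φ : ℤ → ℝ // Monotone φ},
    ∑' m : ℤ, ENNReal.ofReal ‖g (φ.1 (m + 1)) - g (φ.1 m)‖

/-- Total variation over ℤ. -/
noncomputable def varZ (G : ℤ → ℂ) : ENNReal :=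
  ∑' n : ℤ, ENNReal.ofReal ‖G (n + 1) - G n‖

/-!
Writing `G_N(n)` as the average over `t ∈ [-1/2, 1/2]` of `g((t + n) / 2^N)`, the triangle
inequality bounds `Var_ℤ(G_N)` by the average over `t` of the variation of the sampled sequence
`m ↦ g((t + m) / 2^N)`. Each such sequence samples `g` along a monotone sequence of points, so its
variation is at most `Var_ℝ(g)`.
-/

theorem varZ_comp_le_varR (g : ℝ → ℂ) {φ : ℤ → ℝ} (hφ : Monotone φ) :
    varZ (g ∘ φ) ≤ varR g :=
  le_iSup (fun ψ : {ψ : ℤ → ℝ // Monotone ψ} =>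
    ∑' m : ℤ, ENNReal.ofReal ‖g (ψ.1 (m + 1)) - g (ψ.1 m)‖) ⟨φ, hφ⟩

theorem ofReal_norm_sub_le_varR (g : ℝ → ℂ) {x y : ℝ} (hxy : x ≤ y) :
    ENNReal.ofReal ‖g y - g x‖ ≤ varR g := by
  let φ : ℤ → ℝ := fun m => if m ≤ 0 then x else y
  have hφ : Monotone φ := by
    intro a b hab
    simp only [φ]
    split_ifs <;> first | exact le_rfl | exact hxy | omega
  calc ENNReal.ofReal ‖g y - g x‖ = ENNReal.ofReal ‖(g ∘ φ) (0 + 1) - (g ∘ φ) 0‖ := by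
        simp [φ]
    _ ≤ varZ (g ∘ φ) := ENNReal.le_tsum 0
    _ ≤ varR g := varZ_comp_le_varR g hφ

theorem norm_le_of_varR_ne_top {g : ℝ → ℂ} (hBV : varR g ≠ ⊤) (x : ℝ) :
    ‖g x‖ ≤ ‖g 0‖ + (varR g).toReal := by
  have hsub : ‖g x - g 0‖ ≤ (varR g).toReal := by
    rw [← ENNReal.ofReal_le_iff_le_toReal hBV]
    rcases le_total 0 x with h | h
    · exact ofReal_norm_sub_le_varR g h
    · rw [norm_sub_rev]
      exact ofReal_norm_sub_le_varR g h
  calc ‖g x‖ ≤ ‖g 0‖ + ‖g x - g 0‖ := norm_le_insert' (g x) (g 0)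
    _ ≤ ‖g 0‖ + (varR g).toReal := by gcongr

theorem intervalIntegrable_comp_of_varR_ne_top {g : ℝ → ℂ} (hmeas : Measurable g)
    (hBV : varR g ≠ ⊤) {u : ℝ → ℝ} (hu : Measurable u) (a b : ℝ) :
    IntervalIntegrable (g ∘ u) volume a b :=
  IntervalIntegrable.mono_fun' (g := fun _ => ‖g 0‖ + (varR g).toReal)
    intervalIntegrable_const (hmeas.comp hu).aestronglyMeasurable
    (Filter.Eventually.of_forall fun t => norm_le_of_varR_ne_top hBV (u t))

theorem varZ_intervalIntegral_le {a b : ℝ} (hab : a ≤ b) (F : ℝ → ℤ → ℂ)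
    (hF : ∀ n, IntervalIntegrable (F · n) volume a b) :
    varZ (fun n => ∫ t in a..b, F t n) ≤ ∫⁻ t in Set.Ioc a b, varZ (F t) := by
  have hterm : ∀ n : ℤ, ENNReal.ofReal ‖(∫ t in a..b, F t (n + 1)) - ∫ t in a..b, F t n‖ ≤
      ∫⁻ t in Set.Ioc a b, ‖F t (n + 1) - F t n‖ₑ := by
    intro n
    rw [← intervalIntegral.integral_sub (hF (n + 1)) (hF n),
      intervalIntegral.integral_of_le hab, ofReal_norm]
    exact enorm_integral_le_lintegral_enorm _
  have hmeas : ∀ n : ℤ, AEMeasurable (fun t => ‖F t (n + 1) - F t n‖ₑ)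
      (volume.restrict (Set.Ioc a b)) := fun n =>
    (((hF (n + 1)).1.sub (hF n).1).aestronglyMeasurable).enorm
  calc varZ (fun n => ∫ t in a..b, F t n)
      ≤ ∑' n : ℤ, ∫⁻ t in Set.Ioc a b, ‖F t (n + 1) - F t n‖ₑ := ENNReal.tsum_le_tsum hterm
    _ = ∫⁻ t in Set.Ioc a b, ∑' n : ℤ, ‖F t (n + 1) - F t n‖ₑ := (lintegral_tsum hmeas).symm
    _ = ∫⁻ t in Set.Ioc a b, varZ (F t) := by simp only [varZ, ofReal_norm]

theorem smul_intervalIntegral_eq_intervalIntegral_comp (g : ℝ → ℂ) {c : ℝ} (hc : c ≠ 0)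
    (x : ℝ) :
    c • ∫ t in (x - 1/2) / c..(x + 1/2) / c, g t = ∫ t in (-1/2 : ℝ)..1/2, g ((t + x) / c) := by
  simp_rw [add_div _ x c]
  rw [intervalIntegral.integral_comp_div_add g hc (x / c)]
  congr 2 <;> ring

theorem stmt14 (g : ℝ → ℂ) (hmeas : Measurable g) (hBV : varR g ≠ ⊤)
    (N : ℕ) (G : ℤ → ℂ)
    (hG : ∀ n : ℤ, G n =
      (2 ^ N : ℝ) • ∫ t in (((n : ℝ) - 1/2) / 2 ^ N)..(((n : ℝ) + 1/2) / 2 ^ N), g t) :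
    varZ G ≤ varR g := by
  have hc : (0 : ℝ) < 2 ^ N := by positivity
  have hG' : G = fun n : ℤ => ∫ t in (-1/2 : ℝ)..1/2, g ((t + n) / 2 ^ N) := by
    funext n
    rw [hG n, smul_intervalIntegral_eq_intervalIntegral_comp g hc.ne']
  have hsample : ∀ t : ℝ, Monotone fun m : ℤ => (t + m) / 2 ^ N := fun t a b hab =>
    div_le_div_of_nonneg_right (add_le_add_right (Int.cast_le.mpr hab) t) hc.le
  calc varZ G ≤ ∫⁻ t in Set.Ioc (-1/2 : ℝ) (1/2), varZ (fun m => g ((t + m) / 2 ^ N)) := by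
        rw [hG']
        refine varZ_intervalIntegral_le (by norm_num) _ fun n => ?_
        exact intervalIntegrable_comp_of_varR_ne_top hmeas hBV (by fun_prop) _ _
    _ ≤ ∫⁻ _ in Set.Ioc (-1/2 : ℝ) (1/2), varR g :=
        lintegral_mono fun t => varZ_comp_le_varR g (hsample t)
    _ = varR g := by norm_num [setLIntegral_const, Real.volume_Ioc]
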